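/- Let A ∈ ℝ^{m×n} with m ≤ n, let Θ ∈ ℝ^{n×n} be diagonal with strictly positive diagonal entries, and let R_d ∈ ℝ^{m×m} be symmetric positive definite. Then every strictly positive eigenvalue μ of the symmetric matrix M = [[−Θ^{-1}, Aᵀ],[A, R_d]] satisfies μ ≥ (1/2) ( (λ_min(R_d) − max_j (Θ^{-1})_{jj}) + [ (max_j (Θ^{-1})_{jj} + λ_min(R_d))² + 4 σ_min(A)² ]^{1/2} ). In particular this lower-bounds the smallest positive eigenvalue μ_1 of M. -/

import Mathlib

open Matrix

/-- Smallest singular value of A (for m ≤ n): σ_min(A)² = λ_min(A Aᵀ). -/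
noncomputable def sigMin {m n : ℕ} (A : Matrix (Fin m) (Fin n) ℝ) : ℝ :=
  Real.sqrt (⨅ i, (Matrix.isHermitian_mul_conjTranspose_self A).eigenvalues i)

/-! Write the eigenvector as `(u, v)` and let `eⱼ = (Θ⁻¹)ⱼⱼ`, `θ = maxⱼ eⱼ`. The first block
row reads `Aᵀv = (μ + e) ⊙ u`, which forces `v ≠ 0` and, as `0 < μ + eⱼ ≤ μ + θ`, gives
`‖Aᵀv‖² ≤ (μ + θ) ⟪Aᵀv, u⟫`. Testing the second block row against `v` gives
`⟪Aᵀv, u⟫ = μ‖v‖² - vᵀ R_d v ≤ (μ - λ_min(R_d)) ‖v‖²`, while `‖Aᵀv‖² ≥ σ_min(A)² ‖v‖²`.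
Hence `σ_min(A)² ≤ (μ - λ_min(R_d)) (μ + θ)`, so `μ` lies beyond the larger root of this
quadratic, which is the stated bound. -/

open scoped MatrixOrder

theorem Matrix.IsHermitian.iInf_eigenvalues_mul_dotProduct_self_le {ι : Type*} [Fintype ι]
    [DecidableEq ι] {B : Matrix ι ι ℝ} (hB : B.IsHermitian) (x : ι → ℝ) :
    (⨅ i, hB.eigenvalues i) * (x ⬝ᵥ x) ≤ x ⬝ᵥ (B *ᵥ x) := by
  have hle : algebraMap ℝ _ (⨅ i, hB.eigenvalues i) ≤ B := by
    rw [algebraMap_le_iff_le_spectrum hB.isSelfAdjoint, hB.spectrum_real_eq_range_eigenvalues]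
    rintro _ ⟨i, rfl⟩
    exact ciInf_le (Set.finite_range _).bddBelow i
  simpa [sub_mulVec, Algebra.algebraMap_eq_smul_one, dotProduct_sub, smul_mulVec] using
    (Matrix.le_iff.mp hle).dotProduct_mulVec_nonneg x

theorem dotProduct_mul_self_le_mul_dotProduct {ι : Type*} [Fintype ι] {c : ι → ℝ} {C : ℝ}
    (hc : ∀ j, 0 ≤ c j) (hcC : ∀ j, c j ≤ C) (u : ι → ℝ) :
    (c * u) ⬝ᵥ (c * u) ≤ C * ((c * u) ⬝ᵥ u) := by
  simp only [dotProduct, Finset.mul_sum, Pi.mul_apply]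
  refine Finset.sum_le_sum fun j _ => ?_
  have := mul_le_mul_of_nonneg_left (hcC j) (mul_nonneg (hc j) (mul_self_nonneg (u j)))
  linarith

theorem sigMin_sq_mul_dotProduct_self_le {m n : ℕ} (A : Matrix (Fin m) (Fin n) ℝ)
    (v : Fin m → ℝ) : sigMin A ^ 2 * (v ⬝ᵥ v) ≤ (Aᵀ *ᵥ v) ⬝ᵥ (Aᵀ *ᵥ v) := by
  have hAAt := isHermitian_mul_conjTranspose_self A
  rw [sigMin, Real.sq_sqrt (Real.iInf_nonneg (eigenvalues_self_mul_conjTranspose_nonneg A))]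
  calc _ ≤ v ⬝ᵥ ((A * Aᴴ) *ᵥ v) := hAAt.iInf_eigenvalues_mul_dotProduct_self_le v
    _ = (Aᵀ *ᵥ v) ⬝ᵥ (Aᵀ *ᵥ v) := by
      rw [conjTranspose_eq_transpose_of_trivial, ← mulVec_mulVec, dotProduct_mulVec,
        ← mulVec_transpose]

theorem fromBlocks_mulVec_elim_eq_smul_iff {ι κ : Type*} [Fintype ι] [Fintype κ]
    [DecidableEq ι] {e : ι → ℝ} {A : Matrix κ ι ℝ} {R : Matrix κ κ ℝ} {μ : ℝ}
    {u : ι → ℝ} {v : κ → ℝ} :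
    fromBlocks (-diagonal e) Aᵀ A R *ᵥ Sum.elim u v = μ • Sum.elim u v ↔
      Aᵀ *ᵥ v = (fun j => μ + e j) * u ∧ A *ᵥ u + R *ᵥ v = μ • v := by
  rw [fromBlocks_mulVec, Sum.elim_comp_inl, Sum.elim_comp_inr,
    ← Sum.elim_comp_inl_inr (μ • Sum.elim u v), Sum.elim_eq_iff]
  refine and_congr ?_ Iff.rfl
  simp only [funext_iff, Pi.add_apply, neg_mulVec, Pi.neg_apply, mulVec_diagonal,
    Function.comp_apply, Pi.smul_apply, Sum.elim_inl, Pi.mul_apply, smul_eq_mul]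
  exact forall_congr' fun j => by constructor <;> intro h <;> linarith

theorem quadratic_root_le_of_le_sub_mul_add {μ r θ s : ℝ} (hμθ : 0 < μ + θ) (hs : 0 ≤ s)
    (h : s ≤ (μ - r) * (μ + θ)) : (1 / 2) * ((r - θ) + √((θ + r) ^ 2 + 4 * s)) ≤ μ := by
  have hrμ : r ≤ μ := by nlinarith
  have : √((θ + r) ^ 2 + 4 * s) ≤ 2 * μ + θ - r :=
    Real.sqrt_le_iff.mpr ⟨by linarith, by nlinarith⟩
  linarith

theorem sigMin_sq_le_of_fromBlocks_mulVec_eq_smul {m n : ℕ} {A : Matrix (Fin m) (Fin n) ℝ}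
    {e : Fin n → ℝ} (he : ∀ j, 0 < e j) {θ : ℝ} (hθ : 0 ≤ θ) (heθ : ∀ j, e j ≤ θ)
    {R : Matrix (Fin m) (Fin m) ℝ} (hR : R.IsHermitian) {μ : ℝ} (hμ : 0 < μ)
    {u : Fin n → ℝ} {v : Fin m → ℝ} (huv : Sum.elim u v ≠ 0)
    (h : fromBlocks (-diagonal e) Aᵀ A R *ᵥ Sum.elim u v = μ • Sum.elim u v) :
    sigMin A ^ 2 ≤ (μ - ⨅ i, hR.eigenvalues i) * (μ + θ) := by
  obtain ⟨hu, hv⟩ := fromBlocks_mulVec_elim_eq_smul_iff.mp h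
  have hc : ∀ j, 0 < μ + e j := fun j => add_pos hμ (he j)
  have hv0 : v ≠ 0 := by
    rintro rfl
    have hcu : (fun j => μ + e j) * u = 0 := by rw [← hu, mulVec_zero]
    have hu0 : u = 0 :=
      funext fun j => (mul_eq_zero.mp (congrFun hcu j)).resolve_left (hc j).ne'
    exact huv (by rw [hu0, Sum.elim_zero_zero])
  have hvv : 0 < v ⬝ᵥ v := by simpa using dotProduct_star_self_pos_iff.mpr hv0
  have hwu : (Aᵀ *ᵥ v) ⬝ᵥ u = μ * (v ⬝ᵥ v) - v ⬝ᵥ (R *ᵥ v) := by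
    rw [mulVec_transpose, ← dotProduct_mulVec, eq_sub_iff_add_eq, ← dotProduct_add, hv,
      dotProduct_smul, smul_eq_mul]
  refine le_of_mul_le_mul_right ?_ hvv
  calc sigMin A ^ 2 * (v ⬝ᵥ v) ≤ (Aᵀ *ᵥ v) ⬝ᵥ (Aᵀ *ᵥ v) :=
        sigMin_sq_mul_dotProduct_self_le A v
    _ ≤ (μ + θ) * ((Aᵀ *ᵥ v) ⬝ᵥ u) := by
      rw [hu]
      exact dotProduct_mul_self_le_mul_dotProduct (fun j => (hc j).le)
        (fun j => by linarith [heθ j]) u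
    _ ≤ (μ + θ) * ((μ - ⨅ i, hR.eigenvalues i) * (v ⬝ᵥ v)) := by
      rw [hwu]
      gcongr
      linarith [hR.iInf_eigenvalues_mul_dotProduct_self_le v]
    _ = (μ - ⨅ i, hR.eigenvalues i) * (μ + θ) * (v ⬝ᵥ v) := by ring

theorem stmt_12_general {m n : ℕ} (A : Matrix (Fin m) (Fin n) ℝ)
    (d : Fin n → ℝ) (hd : ∀ j, 0 < d j)
    (Rd : Matrix (Fin m) (Fin m) ℝ) (hRd : Rd.PosDef)
    (M : Matrix (Fin n ⊕ Fin m) (Fin n ⊕ Fin m) ℝ)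
    (hMdef : M = Matrix.fromBlocks (-(Matrix.diagonal d)⁻¹) Aᵀ A Rd) :
    ∀ μ : ℝ, 0 < μ →
      ∀ x : Fin n ⊕ Fin m → ℝ, x ≠ 0 → M.mulVec x = μ • x →
      (1 / 2) * (((⨅ i, hRd.1.eigenvalues i) - ⨆ j, (Matrix.diagonal d)⁻¹ j j) +
        Real.sqrt (((⨆ j, (Matrix.diagonal d)⁻¹ j j) + ⨅ i, hRd.1.eigenvalues i) ^ 2 +
          4 * sigMin A ^ 2)) ≤ μ := by
  intro μ hμ x hx heig
  have hdinv : (diagonal d)⁻¹ = diagonal d⁻¹ :=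
    inv_eq_left_inv (by rw [diagonal_mul_diagonal, ← diagonal_one]; simp [(hd _).ne'])
  have hentry : ∀ j, (diagonal d)⁻¹ j j = (d j)⁻¹ := by simp [hdinv]
  have hθ : 0 ≤ ⨆ j, (diagonal d)⁻¹ j j :=
    Real.iSup_nonneg fun j => (hentry j).symm ▸ (inv_pos.2 (hd j)).le
  have heθ : ∀ j, (d j)⁻¹ ≤ ⨆ j, (diagonal d)⁻¹ j j := fun j =>
    hentry j ▸ le_ciSup (f := fun j => (diagonal d)⁻¹ j j) (Set.finite_range _).bddAbove j
  rw [← Sum.elim_comp_inl_inr x] at hx heig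
  rw [hMdef, hdinv] at heig
  refine quadratic_root_le_of_le_sub_mul_add (by linarith) (sq_nonneg _) ?_
  exact sigMin_sq_le_of_fromBlocks_mulVec_eq_smul (fun j => inv_pos.2 (hd j)) hθ heθ hRd.1 hμ
    hx heig

/-- With `m ≤ n`, `Θ` diagonal positive and `R_d` symmetric positive definite, every
strictly positive eigenvalue `μ` of `M = [[−Θ⁻¹, Aᵀ],[A, R_d]]` satisfies
`μ ≥ ½((λ_min(R_d) − max_j (Θ⁻¹)_jj) + √((max_j (Θ⁻¹)_jj + λ_min(R_d))² + 4σ_min(A)²))`. -/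
theorem stmt_12 {m n : ℕ} (hmn : m ≤ n) (A : Matrix (Fin m) (Fin n) ℝ)
    (d : Fin n → ℝ) (hd : ∀ j, 0 < d j)
    (Rd : Matrix (Fin m) (Fin m) ℝ) (hRd : Rd.PosDef)
    (M : Matrix (Fin n ⊕ Fin m) (Fin n ⊕ Fin m) ℝ)
    (hMdef : M = Matrix.fromBlocks (-(Matrix.diagonal d)⁻¹) Aᵀ A Rd) :
    ∀ μ : ℝ, 0 < μ →
      ∀ x : Fin n ⊕ Fin m → ℝ, x ≠ 0 → M.mulVec x = μ • x →
      (1 / 2) * (((⨅ i, hRd.1.eigenvalues i) - ⨆ j, (Matrix.diagonal d)⁻¹ j j) +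
        Real.sqrt (((⨆ j, (Matrix.diagonal d)⁻¹ j j) + ⨅ i, hRd.1.eigenvalues i) ^ 2 +
          4 * sigMin A ^ 2)) ≤ μ :=
  stmt_12_general A d hd Rd hRd M hMdef
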